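/- Collapse of global to tensor disjunction for incompatible formulas: if {φ_i : i ∈ I} is a finite set of pairwise causally incompatible formulas of COD or CO_⤘, then over causal teams the tensor disjunction ⋁_{i∈I} φ_i is logically equivalent to the global disjunction ⤘_{i∈I} φ_i. -/

import Mathlib

namespace CausalTeams

attribute [local instance] Classical.propDecidable

/-- A system of functions over a signature: each endogenous variable `V ∈ En` has a set
of parents `PA V` (not containing `V`) and a function computing its value, which depends
only on the values of its parents. -/
structure FuncSystem (Var : Type) (Val : Var → Type) : Type where
  En : Set Var
  PA : Var → Set Var
  pa_ne : ∀ V, V ∉ PA V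
  fn : ∀ V, (∀ W, Val W) → Val V
  dep_only : ∀ V (s t : ∀ W, Val W), (∀ W ∈ PA V, s W = t W) → fn V s = fn V t

variable {Var : Type} {Val : Var → Type}

/-- Assignments of values to the variables. -/
abbrev Assign (Var : Type) (Val : Var → Type) : Type := ∀ V, Val V

/-- An assignment is compatible with a system of functions if each endogenous variable's
value is the one generated by its function. -/
def Compat (s : Assign Var Val) (F : FuncSystem Var Val) : Prop :=
  ∀ V ∈ F.En, s V = F.fn V s

/-- The endogenous variables whose generating function is constant. -/
def Cn (F : FuncSystem Var Val) : Set Var :=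
  {V | V ∈ F.En ∧ ∀ s t : Assign Var Val, F.fn V s = F.fn V t}

/-- The functions for `V` in `F` and `G` are equivalent up to dummy arguments: they agree
whenever their arguments agree on the common parents of `V`. -/
def fnEquiv (F G : FuncSystem Var Val) (V : Var) : Prop :=
  ∀ s t : Assign Var Val,
    (∀ W, W ∈ F.PA V → W ∈ G.PA V → s W = t W) → F.fn V s = G.fn V t

/-- Equivalence of systems of functions up to dummy arguments. -/
def sysEquiv (F G : FuncSystem Var Val) : Prop :=
  F.En \ Cn F = G.En \ Cn G ∧ ∀ V ∈ F.En \ Cn F, fnEquiv F G V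

/-- The edge relation of the causal graph of `F`. -/
def Edge (F : FuncSystem Var Val) (W V : Var) : Prop := V ∈ F.En ∧ W ∈ F.PA V

/-- `F` is recursive: its causal graph is acyclic. -/
def RecursiveSys (F : FuncSystem Var Val) : Prop :=
  ∀ V, ¬ Relation.TransGen (Edge F) V V

/-- The system of functions resulting from the intervention `do(X = x)`: the variables of
`X` are made exogenous; parents and functions of the remaining endogenous variables are kept. -/
def restrictSys (F : FuncSystem Var Val) (X : Finset Var) : FuncSystem Var Val where
  En := F.En \ ↑X
  PA := F.PA
  pa_ne := F.pa_ne
  fn := F.fn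
  dep_only := F.dep_only

section InterveneAssign
variable [DecidableEq Var] [Fintype Var]

/-- One step of recomputation after the intervention `do(X = x)`. -/
noncomputable def stepFn (F : FuncSystem Var Val) (X : Finset Var) (x : Assign Var Val)
    (s : Assign Var Val) : Assign Var Val :=
  fun V => if V ∈ X then x V else if V ∈ F.En then F.fn V s else s V

/-- The result of the intervention `do(X = x)` on the assignment `s`
(for recursive systems, iterating the recomputation step sufficiently many times
reaches the fixed point). -/
noncomputable def interveneAssign (F : FuncSystem Var Val) (X : Finset Var) (x : Assign Var Val)
    (s : Assign Var Val) : Assign Var Val :=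
  (stepFn F X x)^[Fintype.card Var + 1] s

end InterveneAssign

/-- Formulas: equality atoms `V = v`, dependence atoms `=(Xs; Y)`, negation, conjunction,
tensor disjunction, global disjunction, and interventionist counterfactuals
`X = x □→ φ` (the antecedent is a finite set of variables together with the values
imposed on them, read off from an assignment; such antecedents are always consistent). -/
inductive Formula (Var : Type) (Val : Var → Type) : Type where
  | eq : (V : Var) → Val V → Formula Var Val
  | dep : List Var → Var → Formula Var Val
  | neg : Formula Var Val → Formula Var Val
  | and : Formula Var Val → Formula Var Val → Formula Var Val
  | or : Formula Var Val → Formula Var Val → Formula Var Val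
  | gor : Formula Var Val → Formula Var Val → Formula Var Val
  | cf : Finset Var → Assign Var Val → Formula Var Val → Formula Var Val

/-- CO-formulas: no dependence atoms, no global disjunction. -/
def IsCO : Formula Var Val → Prop
  | .eq _ _ => True
  | .dep _ _ => False
  | .neg φ => IsCO φ
  | .and φ ψ => IsCO φ ∧ IsCO ψ
  | .or φ ψ => IsCO φ ∧ IsCO ψ
  | .gor _ _ => False
  | .cf _ _ φ => IsCO φ

/-- COD-formulas: CO plus dependence atoms; negation applies only to CO-formulas. -/
def IsCOD : Formula Var Val → Prop
  | .eq _ _ => True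
  | .dep _ _ => True
  | .neg φ => IsCO φ
  | .and φ ψ => IsCOD φ ∧ IsCOD ψ
  | .or φ ψ => IsCOD φ ∧ IsCOD ψ
  | .gor _ _ => False
  | .cf _ _ φ => IsCOD φ

/-- CO_⤘-formulas: CO plus global disjunction; negation applies only to CO-formulas. -/
def IsCOglobal : Formula Var Val → Prop
  | .eq _ _ => True
  | .dep _ _ => False
  | .neg φ => IsCO φ
  | .and φ ψ => IsCOglobal φ ∧ IsCOglobal ψ
  | .or φ ψ => IsCOglobal φ ∧ IsCOglobal ψ
  | .gor φ ψ => IsCOglobal φ ∧ IsCOglobal ψ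
  | .cf _ _ φ => IsCOglobal φ

/-- Counterfactual-free formulas: no occurrence of `□→`. -/
def CFFree : Formula Var Val → Prop
  | .eq _ _ => True
  | .dep _ _ => True
  | .neg φ => CFFree φ
  | .and φ ψ => CFFree φ ∧ CFFree ψ
  | .or φ ψ => CFFree φ ∧ CFFree ψ
  | .gor φ ψ => CFFree φ ∧ CFFree ψ
  | .cf _ _ _ => False

section Semantics
variable [DecidableEq Var] [Fintype Var]

/-- Causal team semantics: satisfaction of a formula by a team of assignments together
with a system of functions. -/
noncomputable def csat : FuncSystem Var Val → Set (Assign Var Val) → Formula Var Val → Prop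
  | _, T, .eq V v => ∀ s ∈ T, s V = v
  | _, T, .dep Xs Y => ∀ s ∈ T, ∀ t ∈ T, (∀ W ∈ Xs, s W = t W) → s Y = t Y
  | F, T, .neg φ => ∀ s ∈ T, ¬ csat F {s} φ
  | F, T, .and φ ψ => csat F T φ ∧ csat F T ψ
  | F, T, .or φ ψ => ∃ T₁ T₂, T₁ ∪ T₂ = T ∧ csat F T₁ φ ∧ csat F T₂ ψ
  | F, T, .gor φ ψ => csat F T φ ∨ csat F T ψ
  | F, T, .cf X x φ => csat (restrictSys F X) (interveneAssign F X x '' T) φ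

end Semantics

/-- Generalized causal teams: sets of pairs of an assignment and a system of functions. -/
abbrev GCT (Var : Type) (Val : Var → Type) : Type :=
  Set (Assign Var Val × FuncSystem Var Val)

/-- The team component of a generalized causal team. -/
def teamOf (T : GCT Var Val) : Set (Assign Var Val) := Prod.fst '' T

/-- A genuine (recursive) generalized causal team: all pairs are compatible and all
function components are recursive. -/
def IsGCT (T : GCT Var Val) : Prop := ∀ p ∈ T, Compat p.1 p.2 ∧ RecursiveSys p.2

section GSemantics
variable [DecidableEq Var] [Fintype Var]

/-- Pointwise intervention on a generalized causal team. -/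
noncomputable def gIntervene (T : GCT Var Val) (X : Finset Var) (x : Assign Var Val) : GCT Var Val :=
  (fun p => (interveneAssign p.2 X x p.1, restrictSys p.2 X)) '' T

/-- Generalized causal team semantics. -/
noncomputable def gsat : GCT Var Val → Formula Var Val → Prop
  | T, .eq V v => ∀ p ∈ T, p.1 V = v
  | T, .dep Xs Y => ∀ p ∈ T, ∀ q ∈ T, (∀ W ∈ Xs, p.1 W = q.1 W) → p.1 Y = q.1 Y
  | T, .neg φ => ∀ p ∈ T, ¬ gsat {p} φ
  | T, .and φ ψ => gsat T φ ∧ gsat T ψ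
  | T, .or φ ψ => ∃ T₁ T₂, T₁ ∪ T₂ = T ∧ gsat T₁ φ ∧ gsat T₂ ψ
  | T, .gor φ ψ => gsat T φ ∨ gsat T ψ
  | T, .cf X x φ => gsat (gIntervene T X x) φ

end GSemantics

/-- Equivalence of generalized causal teams: for each system of functions `F`, the
assignments occurring together with a function component `∼`-similar to `F` are the same. -/
def gctEquiv (S T : GCT Var Val) : Prop :=
  ∀ F : FuncSystem Var Val,
    {s | ∃ G, (s, G) ∈ S ∧ sysEquiv G F} = {s | ∃ G, (s, G) ∈ T ∧ sysEquiv G F}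

/-- `S ≼ T` iff `S ≈ R ⊆ T` for some `R`. -/
def sle (S T : GCT Var Val) : Prop := ∃ R : GCT Var Val, gctEquiv S R ∧ R ⊆ T

/-- The generalized causal team generated by a causal team. -/
def toGCT (team : Set (Assign Var Val)) (F : FuncSystem Var Val) : GCT Var Val :=
  (fun s => (s, F)) '' team

/-- Equivalence of elements of generalized causal teams: same assignment and
`∼`-similar function components. -/
def pairEquiv (p q : Assign Var Val × FuncSystem Var Val) : Prop :=
  p.1 = q.1 ∧ sysEquiv p.2 q.2

/-- The quotient `T/≈` has at most `k` elements: `T` is covered by `k` representatives. -/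
def quotCardLE (T : GCT Var Val) (k : ℕ) : Prop :=
  ∃ R : Finset (Assign Var Val × FuncSystem Var Val),
    R.card ≤ k ∧ ∀ p ∈ T, ∃ q ∈ R, pairEquiv p q

section Entailment
variable [DecidableEq Var] [Fintype Var]

/-- Entailment over (recursive) generalized causal teams. -/
def gEntails (Δ : Set (Formula Var Val)) (α : Formula Var Val) : Prop :=
  ∀ T : GCT Var Val, IsGCT T → (∀ γ ∈ Δ, gsat T γ) → gsat T α

/-- Entailment over (recursive) causal teams. -/
def cEntails (Δ : Set (Formula Var Val)) (α : Formula Var Val) : Prop :=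
  ∀ (F : FuncSystem Var Val) (team : Set (Assign Var Val)),
    RecursiveSys F → (∀ s ∈ team, Compat s F) →
    (∀ γ ∈ Δ, csat F team γ) → csat F team α

/-- Causal incompatibility of two formulas. -/
def Incompatible (φ ψ : Formula Var Val) : Prop :=
  ∀ (F G : FuncSystem Var Val) (S T : Set (Assign Var Val)),
    S.Nonempty → T.Nonempty → RecursiveSys F → RecursiveSys G →
    (∀ s ∈ S, Compat s F) → (∀ t ∈ T, Compat t G) →
    csat F S φ → csat G T ψ → ¬ sysEquiv F G

end Entailment

section FormulaHelpers
variable [DecidableEq Var] [Fintype Var] [Nonempty Var]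
  [∀ V, Fintype (Val V)] [∀ V, Nonempty (Val V)]

/-- The falsum formula `⊥ := V = v ∧ V ≠ v`. -/
noncomputable def falsum : Formula Var Val :=
  let V := Classical.arbitrary Var
  Formula.and (Formula.eq V (Classical.arbitrary (Val V)))
    (Formula.neg (Formula.eq V (Classical.arbitrary (Val V))))

/-- Finite conjunction (the empty conjunction is `¬⊥`). -/
noncomputable def bigAnd : List (Formula Var Val) → Formula Var Val
  | [] => Formula.neg falsum
  | [φ] => φ
  | φ :: l => Formula.and φ (bigAnd l)

/-- Finite tensor disjunction (the empty disjunction is `⊥`). -/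
noncomputable def bigOr : List (Formula Var Val) → Formula Var Val
  | [] => falsum
  | [φ] => φ
  | φ :: l => Formula.or φ (bigOr l)

/-- Finite global disjunction (the empty disjunction is `⊥`). -/
noncomputable def bigGor : List (Formula Var Val) → Formula Var Val
  | [] => falsum
  | [φ] => φ
  | φ :: l => Formula.gor φ (bigGor l)

/-- The conjunction `⋀_{V ∈ Dom} V = s(V)` describing the assignment `s`. -/
noncomputable def eqConj (s : Assign Var Val) : Formula Var Val :=
  bigAnd ((Finset.univ : Finset Var).toList.map fun V => Formula.eq V (s V))

/-- `Θ^A := ⋁_{s ∈ A} ⋀_{V ∈ Dom} V = s(V)`. -/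
noncomputable def Theta (A : Finset (Assign Var Val)) : Formula Var Val :=
  bigOr (A.toList.map eqConj)

/-- The constancy atom `=(V)`. -/
def conAtom (V : Var) : Formula Var Val := Formula.dep [] V

/-- `μ := ⋀_{V ∈ Dom} ⋀_{w} (W_V = w □→ =(V))` where `W_V = Dom \ {V}`. -/
noncomputable def muForm : Formula Var Val :=
  bigAnd ((Finset.univ : Finset Var).toList.map fun V =>
    bigAnd (((Finset.univ : Finset (Assign Var Val))).toList.map fun w =>
      Formula.cf ((Finset.univ : Finset Var).erase V) w (conAtom V)))

/-- `χ := μ ∧ ⋀_{V ∈ Dom} =(V)`. -/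
noncomputable def chiForm : Formula Var Val :=
  Formula.and muForm (bigAnd ((Finset.univ : Finset Var).toList.map conAtom))

/-- `χ_k`: the `k`-fold tensor disjunction of `χ` (with `χ_0 := ⊥`). -/
noncomputable def chiK : ℕ → Formula Var Val
  | 0 => falsum
  | 1 => chiForm
  | n + 2 => Formula.or chiForm (chiK (n + 1))

end FormulaHelpers

/-! Every formula is satisfied by the empty team, and since `F ∼ F`, no team over a single
system `F` splits into two nonempty parts satisfying incompatible formulas. So in a split
witnessing the tensor disjunction, at most one part is nonempty, and that part is the whole
team. -/

lemma sysEquiv_refl (F : FuncSystem Var Val) : sysEquiv F F :=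
  ⟨rfl, fun V _ s t h => F.dep_only V s t fun W hW => h W hW hW⟩

section TeamSemantics
variable [DecidableEq Var] [Fintype Var]

lemma csat_empty (F : FuncSystem Var Val) (φ : Formula Var Val) : csat F ∅ φ := by
  induction φ generalizing F with
  | eq | dep | neg => intro s hs; exact absurd hs (Set.notMem_empty s)
  | and φ ψ ihφ ihψ => exact ⟨ihφ F, ihψ F⟩
  | or φ ψ ihφ ihψ => exact ⟨∅, ∅, Set.union_empty ∅, ihφ F, ihψ F⟩
  | gor φ ψ ihφ _ => exact Or.inl (ihφ F)
  | cf X x φ ih =>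
      show csat _ (interveneAssign F X x '' ∅) φ
      rw [Set.image_empty]
      exact ih _

lemma eq_empty_or_csat_iff {F : FuncSystem Var Val} {T : Set (Assign Var Val)}
    {φ : Formula Var Val} : T = ∅ ∨ csat F T φ ↔ csat F T φ :=
  or_iff_right_of_imp fun hT => hT ▸ csat_empty F φ

lemma Incompatible.eq_empty_or_eq_empty {φ ψ : Formula Var Val} (h : Incompatible φ ψ)
    {F : FuncSystem Var Val} (hF : RecursiveSys F) {T₁ T₂ : Set (Assign Var Val)}
    (hT₁ : ∀ s ∈ T₁, Compat s F) (hT₂ : ∀ s ∈ T₂, Compat s F)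
    (hφ : csat F T₁ φ) (hψ : csat F T₂ ψ) : T₁ = ∅ ∨ T₂ = ∅ := by
  by_contra! hne
  exact h F F T₁ T₂ hne.1 hne.2 hF hF hT₁ hT₂ hφ hψ (sysEquiv_refl F)

end TeamSemantics

section FiniteDisjunctions
variable [DecidableEq Var] [Fintype Var] [Nonempty Var] [∀ V, Nonempty (Val V)]
  {F : FuncSystem Var Val}

lemma csat_falsum_iff {T : Set (Assign Var Val)} : csat F T falsum ↔ T = ∅ := by
  refine ⟨fun ⟨hV, hnV⟩ => Set.eq_empty_iff_forall_notMem.2 fun s hs => ?_,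
    fun hT => hT ▸ csat_empty F _⟩
  exact hnV s hs fun t ht => Set.mem_singleton_iff.1 ht ▸ hV s hs

lemma csat_bigOr_of_mem {T : Set (Assign Var Val)} {ψ : Formula Var Val} :
    ∀ {l : List (Formula Var Val)}, ψ ∈ l → csat F T ψ → csat F T (bigOr l)
  | [_], hψl, hψ => by
      obtain rfl := List.mem_singleton.1 hψl
      rwa [bigOr]
  | _ :: _ :: _, hψl, hψ => by
      rcases List.mem_cons.1 hψl with rfl | hψl
      · exact ⟨T, ∅, Set.union_empty T, hψ, csat_empty F _⟩
      · exact ⟨∅, T, Set.empty_union T, csat_empty F _, csat_bigOr_of_mem hψl hψ⟩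

lemma csat_bigGor_iff :
    ∀ {l : List (Formula Var Val)} {T : Set (Assign Var Val)},
      csat F T (bigGor l) ↔ T = ∅ ∨ ∃ ψ ∈ l, csat F T ψ
  | [], T => by
      simpa [bigGor] using csat_falsum_iff
  | [a], T => by
      simp only [bigGor, List.mem_singleton, exists_eq_left, eq_empty_or_csat_iff]
  | a :: b :: l, T => by
      change csat F T a ∨ csat F T (bigGor (b :: l)) ↔ _
      rw [csat_bigGor_iff, List.exists_mem_cons_iff _ a]
      exact or_left_comm

lemma csat_bigOr_iff_of_pairwise_incompatible (hF : RecursiveSys F) :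
    ∀ {l : List (Formula Var Val)} {T : Set (Assign Var Val)},
      l.Pairwise Incompatible → (∀ s ∈ T, Compat s F) →
      (csat F T (bigOr l) ↔ T = ∅ ∨ ∃ ψ ∈ l, csat F T ψ)
  | [], T, _, _ => by
      simpa [bigOr] using csat_falsum_iff
  | [a], T, _, _ => by
      simp only [bigOr, List.mem_singleton, exists_eq_left, eq_empty_or_csat_iff]
  | a :: b :: l, T, hl, hT => by
      refine ⟨fun h => ?_, ?_⟩
      · obtain ⟨T₁, T₂, rfl, ha, hbl⟩ := h
        have hT₁ : ∀ s ∈ T₁, Compat s F := fun s hs => hT s (Or.inl hs)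
        have hT₂ : ∀ s ∈ T₂, Compat s F := fun s hs => hT s (Or.inr hs)
        have ha' : T₂ = ∅ → csat F (T₁ ∪ T₂) a := fun h₂ => by rwa [h₂, Set.union_empty]
        rcases (csat_bigOr_iff_of_pairwise_incompatible hF hl.of_cons hT₂).1 hbl
          with h₂ | ⟨ψ, hψl, hψ⟩
        · exact Or.inr ⟨a, List.mem_cons_self, ha' h₂⟩
        rcases (List.rel_of_pairwise_cons hl hψl).eq_empty_or_eq_empty hF hT₁ hT₂ ha hψ
          with h₁ | h₂
        · exact Or.inr ⟨ψ, List.mem_cons_of_mem a hψl, by rwa [h₁, Set.empty_union]⟩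
        · exact Or.inr ⟨a, List.mem_cons_self, ha' h₂⟩
      · rintro (rfl | ⟨ψ, hψl, hψ⟩)
        · exact csat_empty F _
        · exact csat_bigOr_of_mem hψl hψ

end FiniteDisjunctions

theorem incompatible_or_collapse_general {Var : Type} [Fintype Var] [DecidableEq Var] [Nonempty Var]
    {Val : Var → Type} [∀ V, Nonempty (Val V)]
    {n : ℕ} (φ : Fin n → Formula Var Val)
    (hinc : ∀ i j, i ≠ j → Incompatible (φ i) (φ j))
    (F : FuncSystem Var Val) (team : Set (Assign Var Val))
    (hrec : RecursiveSys F) (hcompat : ∀ s ∈ team, Compat s F) :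
    csat F team (bigOr (List.ofFn φ)) ↔ csat F team (bigGor (List.ofFn φ)) := by
  have hpairwise : (List.ofFn φ).Pairwise Incompatible :=
    List.pairwise_ofFn.2 fun i j hij => hinc i j hij.ne
  rw [csat_bigOr_iff_of_pairwise_incompatible hrec hpairwise hcompat, csat_bigGor_iff]

/-- over causal teams, the tensor disjunction of a finite family of
pairwise causally incompatible formulas of COD or CO_⤘ is equivalent to their global
disjunction. -/
theorem incompatible_or_collapse {Var : Type} [Fintype Var] [DecidableEq Var] [Nonempty Var]
    {Val : Var → Type} [∀ V, Fintype (Val V)] [∀ V, Nonempty (Val V)]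
    {n : ℕ} (φ : Fin n → Formula Var Val)
    (hlang : ∀ i, IsCOD (φ i) ∨ IsCOglobal (φ i))
    (hinc : ∀ i j, i ≠ j → Incompatible (φ i) (φ j))
    (F : FuncSystem Var Val) (team : Set (Assign Var Val))
    (hrec : RecursiveSys F) (hcompat : ∀ s ∈ team, Compat s F) :
    csat F team (bigOr (List.ofFn φ)) ↔ csat F team (bigGor (List.ofFn φ)) :=
  incompatible_or_collapse_general φ hinc F team hrec hcompat

end CausalTeams
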